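/- (Theorem 1.1) Let H be a complex Hilbert space and L, M closed linear subspaces with Q = L ∩ M, satisfying (1) c = c(L,M) < 1 and (2) the orthogonal complement of L + M in H is {0}. Then every vector x ∈ H can be represented as x = x_L + x_M with x_L ∈ L, x_M ∈ M, such that ‖x_L‖ ≤ A₁‖x‖ and ‖x_M‖ ≤ A₂‖x‖, where A₁ = a₁ + 1/√(1 − c²), A₂ = a₂ + 1/√(1 − c²) with 0 ≤ a₁, a₂ ≤ 1; moreover one may take a₁ = a₂ = 0 if L ∩ M = {0}. -/

import Mathlib

open scoped InnerProductSpace Pointwise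

/-!
Write `Q = L ⊓ M` and `M' = M ⊓ Qᗮ`, so that `L + M = L + M'`. For `l = q + u ∈ L` with `q ∈ Q`,
`u ∈ L ⊖ Q` and `v ∈ M'`, Pythagoras and the bound `|⟪u, v⟫| ≤ c ‖u‖ ‖v‖` give
`‖l + v‖² = ‖q‖² + ‖u + v‖² ≥ (1 - c²) max(‖l‖², ‖v‖²)`.
Hence the summation map `L × M' → H` is bounded below, so its range `L + M` is closed, and
therefore all of `H` since `(L + M)ᗮ = 0`. The same estimate shows that `a₁ = a₂ = 0` always work.
-/

/-- The inclination `c(L,M)` of two subspaces `L`, `M` of a complex Hilbert space: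
the supremum of `|⟪u,v⟫| / (‖u‖‖v‖)` over nonzero `u ∈ L ⊖ Q` and nonzero `v ∈ M ⊖ Q`,
where `Q = L ⊓ M` and `L ⊖ Q = L ⊓ Qᗮ`, `M ⊖ Q = M ⊓ Qᗮ`. -/
noncomputable def inclination {H : Type*} [NormedAddCommGroup H] [InnerProductSpace ℂ H]
    (L M : Submodule ℂ H) : ℝ :=
  sSup {r : ℝ | ∃ u ∈ L ⊓ (L ⊓ M)ᗮ, ∃ v ∈ M ⊓ (L ⊓ M)ᗮ,
    u ≠ 0 ∧ v ≠ 0 ∧ r = ‖⟪u, v⟫_ℂ‖ / (‖u‖ * ‖v‖)}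

theorem le_one_div_sqrt_mul_of_mul_sq_le {a b d : ℝ} (hd : 0 < d) (hb : 0 ≤ b)
    (h : d * a ^ 2 ≤ b ^ 2) : a ≤ 1 / √d * b := by
  rw [one_div_mul_eq_div, le_div_iff₀' (Real.sqrt_pos.mpr hd)]
  refine (abs_le_of_sq_le_sq' ?_ hb).2
  rwa [mul_pow, Real.sq_sqrt hd.le]

theorem Submodule.isClosed_sup_of_norm_le_mul_norm_add {𝕜 E : Type*} [NormedField 𝕜]
    [NormedAddCommGroup E] [NormedSpace 𝕜 E] {U V : Submodule 𝕜 E}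
    [CompleteSpace U] [CompleteSpace V] {C : ℝ}
    (hU : ∀ u ∈ U, ∀ v ∈ V, ‖u‖ ≤ C * ‖u + v‖) (hV : ∀ u ∈ U, ∀ v ∈ V, ‖v‖ ≤ C * ‖u + v‖) :
    IsClosed ((U ⊔ V : Submodule 𝕜 E) : Set E) := by
  let f := U.subtypeL.coprod V.subtypeL
  have hrange : Set.range f = U ⊔ V := by
    rw [Submodule.sup_eq_range, LinearMap.coe_range]
    rfl
  have hanti : AntilipschitzWith C.toNNReal f := by
    refine f.antilipschitz_of_bound fun ⟨u, v⟩ => ?_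
    have hfC : C * ‖f (u, v)‖ ≤ C.toNNReal * ‖f (u, v)‖ :=
      mul_le_mul_of_nonneg_right (Real.le_coe_toNNReal C) (norm_nonneg _)
    exact (max_le (hU u u.2 v v.2) (hV u u.2 v v.2)).trans hfC
  rw [← hrange]
  exact hanti.isClosed_range f.uniformContinuous

section InnerProduct

variable {𝕜 E : Type*} [RCLike 𝕜] [NormedAddCommGroup E] [InnerProductSpace 𝕜 E]

theorem norm_add_sq_eq_of_inner_eq_zero {x y : E} (h : ⟪x, y⟫_𝕜 = 0) :
    ‖x + y‖ ^ 2 = ‖x‖ ^ 2 + ‖y‖ ^ 2 := by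
  rw [norm_add_sq (𝕜 := 𝕜), h]
  simp

theorem one_sub_sq_mul_sq_norm_le_sq_norm_add {u v : E} {c : ℝ}
    (h : ‖⟪u, v⟫_𝕜‖ ≤ c * (‖u‖ * ‖v‖)) : (1 - c ^ 2) * ‖u‖ ^ 2 ≤ ‖u + v‖ ^ 2 := by
  have hre : -(c * (‖u‖ * ‖v‖)) ≤ RCLike.re ⟪u, v⟫_𝕜 :=
    (neg_le_neg (h.trans' (RCLike.abs_re_le_norm _))).trans (neg_abs_le _)
  rw [norm_add_sq (𝕜 := 𝕜)]
  nlinarith [sq_nonneg (c * ‖u‖ - ‖v‖)]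

end InnerProduct

section Inclination

variable {H : Type*} [NormedAddCommGroup H] [InnerProductSpace ℂ H] {L M : Submodule ℂ H}

theorem inclination_nonneg (L M : Submodule ℂ H) : 0 ≤ inclination L M :=
  Real.sSup_nonneg <| by
    rintro _ ⟨u, -, v, -, -, -, rfl⟩
    positivity

theorem norm_inner_le_inclination_mul {u v : H} (hu : u ∈ L ⊓ (L ⊓ M)ᗮ)
    (hv : v ∈ M ⊓ (L ⊓ M)ᗮ) : ‖⟪u, v⟫_ℂ‖ ≤ inclination L M * (‖u‖ * ‖v‖) := by
  rcases eq_or_ne u 0 with rfl | hu0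
  · simp
  rcases eq_or_ne v 0 with rfl | hv0
  · simp
  have hpos : 0 < ‖u‖ * ‖v‖ := by positivity
  have hbdd : BddAbove {r : ℝ | ∃ u ∈ L ⊓ (L ⊓ M)ᗮ, ∃ v ∈ M ⊓ (L ⊓ M)ᗮ,
      u ≠ 0 ∧ v ≠ 0 ∧ r = ‖⟪u, v⟫_ℂ‖ / (‖u‖ * ‖v‖)} := by
    refine ⟨1, ?_⟩
    rintro _ ⟨u, -, v, -, -, -, rfl⟩
    exact div_le_one_of_le₀ (norm_inner_le_norm u v) (by positivity)
  rw [← div_le_iff₀ hpos]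
  exact le_csSup hbdd ⟨u, hu, v, hv, hu0, hv0, rfl⟩

theorem norm_le_mul_norm_add_of_inclination_lt_one [(L ⊓ M).HasOrthogonalProjection]
    (hc : inclination L M < 1) {l v : H} (hl : l ∈ L) (hv : v ∈ M ⊓ (L ⊓ M)ᗮ) :
    ‖l‖ ≤ 1 / √(1 - inclination L M ^ 2) * ‖l + v‖ ∧
      ‖v‖ ≤ 1 / √(1 - inclination L M ^ 2) * ‖l + v‖ := by
  set c := inclination L M
  set q := (L ⊓ M).starProjection l
  have hq : q ∈ L ⊓ M := (L ⊓ M).starProjection_apply_mem l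
  have hu : l - q ∈ L ⊓ (L ⊓ M)ᗮ :=
    ⟨L.sub_mem hl hq.1, (L ⊓ M).sub_starProjection_mem_orthogonal l⟩
  have hl_sq : ‖l‖ ^ 2 = ‖q‖ ^ 2 + ‖l - q‖ ^ 2 := by
    rw [← norm_add_sq_eq_of_inner_eq_zero (𝕜 := ℂ)
      (Submodule.inner_right_of_mem_orthogonal hq hu.2), add_sub_cancel]
  have hlv_sq : ‖l + v‖ ^ 2 = ‖q‖ ^ 2 + ‖l - q + v‖ ^ 2 := by
    rw [← norm_add_sq_eq_of_inner_eq_zero (𝕜 := ℂ)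
      (Submodule.inner_right_of_mem_orthogonal hq (Submodule.add_mem _ hu.2 hv.2)),
      ← add_assoc, add_sub_cancel]
  have hu_bound := one_sub_sq_mul_sq_norm_le_sq_norm_add (norm_inner_le_inclination_mul hu hv)
  have hv_bound : (1 - c ^ 2) * ‖v‖ ^ 2 ≤ ‖v + (l - q)‖ ^ 2 :=
    one_sub_sq_mul_sq_norm_le_sq_norm_add (𝕜 := ℂ) <| by
      rw [norm_inner_symm, mul_comm ‖v‖]
      exact norm_inner_le_inclination_mul hu hv
  rw [add_comm v] at hv_bound
  have hd : 0 < 1 - c ^ 2 := by nlinarith [inclination_nonneg L M]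
  constructor <;> refine le_one_div_sqrt_mul_of_mul_sq_le hd (norm_nonneg _) ?_ <;>
    nlinarith [mul_nonneg (sq_nonneg c) (sq_nonneg ‖q‖)]

theorem sup_inf_orthogonal_inf_eq_sup [(L ⊓ M).HasOrthogonalProjection] :
    L ⊔ M ⊓ (L ⊓ M)ᗮ = L ⊔ M := by
  conv_rhs => rw [← Submodule.sup_orthogonal_inf_of_hasOrthogonalProjection
    (inf_le_right : L ⊓ M ≤ M)]
  rw [← sup_assoc, sup_inf_self, inf_comm]

end Inclination

theorem stmt_4_general {H : Type*} [NormedAddCommGroup H] [InnerProductSpace ℂ H] [CompleteSpace H]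
    (L M : Submodule ℂ H) (hL : IsClosed (L : Set H)) (hM : IsClosed (M : Set H))
    (hc : inclination L M < 1) (horth : (L ⊔ M)ᗮ = ⊥) :
    ∃ a₁ a₂ : ℝ, 0 ≤ a₁ ∧ a₁ ≤ 1 ∧ 0 ≤ a₂ ∧ a₂ ≤ 1 ∧
      (L ⊓ M = ⊥ → a₁ = 0 ∧ a₂ = 0) ∧
      ∀ x : H, ∃ xL ∈ L, ∃ xM ∈ M, x = xL + xM ∧
        ‖xL‖ ≤ (a₁ + 1 / Real.sqrt (1 - inclination L M ^ 2)) * ‖x‖ ∧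
        ‖xM‖ ≤ (a₂ + 1 / Real.sqrt (1 - inclination L M ^ 2)) * ‖x‖ := by
  have : CompleteSpace L := hL.completeSpace_coe
  have : CompleteSpace (L ⊓ M : Submodule ℂ H) := (hL.inter hM).completeSpace_coe
  have : CompleteSpace (M ⊓ (L ⊓ M)ᗮ : Submodule ℂ H) :=
    (hM.inter (L ⊓ M).isClosed_orthogonal).completeSpace_coe
  have hclosed : IsClosed ((L ⊔ M : Submodule ℂ H) : Set H) := by
    rw [← sup_inf_orthogonal_inf_eq_sup]
    exact Submodule.isClosed_sup_of_norm_le_mul_norm_add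
      (fun _ hl _ hv => (norm_le_mul_norm_add_of_inclination_lt_one hc hl hv).1)
      (fun _ hl _ hv => (norm_le_mul_norm_add_of_inclination_lt_one hc hl hv).2)
  have : CompleteSpace (L ⊔ M : Submodule ℂ H) := hclosed.completeSpace_coe
  have htop : L ⊔ M ⊓ (L ⊓ M)ᗮ = ⊤ := by
    rw [sup_inf_orthogonal_inf_eq_sup, ← Submodule.orthogonal_eq_bot_iff, horth]
  refine ⟨0, 0, le_rfl, zero_le_one, le_rfl, zero_le_one, fun _ => ⟨rfl, rfl⟩, fun x => ?_⟩
  obtain ⟨l, hl, v, hv, rfl⟩ := Submodule.mem_sup.mp (htop ▸ Submodule.mem_top : x ∈ _)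
  simpa only [zero_add] using
    ⟨l, hl, v, hv.1, rfl, norm_le_mul_norm_add_of_inclination_lt_one hc hl hv⟩

theorem stmt_4 {H : Type*} [NormedAddCommGroup H] [InnerProductSpace ℂ H] [CompleteSpace H]
    (L M : Submodule ℂ H) (hL : IsClosed (L : Set H)) (hM : IsClosed (M : Set H))
    (hLQ : ∃ u ∈ L ⊓ (L ⊓ M)ᗮ, u ≠ 0) (hMQ : ∃ v ∈ M ⊓ (L ⊓ M)ᗮ, v ≠ 0)
    (hc : inclination L M < 1) (horth : (L ⊔ M)ᗮ = ⊥) :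
    ∃ a₁ a₂ : ℝ, 0 ≤ a₁ ∧ a₁ ≤ 1 ∧ 0 ≤ a₂ ∧ a₂ ≤ 1 ∧
      (L ⊓ M = ⊥ → a₁ = 0 ∧ a₂ = 0) ∧
      ∀ x : H, ∃ xL ∈ L, ∃ xM ∈ M, x = xL + xM ∧
        ‖xL‖ ≤ (a₁ + 1 / Real.sqrt (1 - inclination L M ^ 2)) * ‖x‖ ∧
        ‖xM‖ ≤ (a₂ + 1 / Real.sqrt (1 - inclination L M ^ 2)) * ‖x‖ :=
  stmt_4_general L M hL hM hc horth
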